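/- Let M > N be positive integers and v_1,…,v_M ∈ ℂ^N unit-norm vectors. Then max_{i≠j} |⟨v_i, v_j⟩| ≥ sqrt((M−N)/(N(M−1))). -/

import Mathlib

/-!
Put the vectors as the columns of a matrix `A` (in an orthonormal basis). The Gram matrix `AᴴA`
and the frame operator `AAᴴ` have the same Frobenius norm, and Cauchy–Schwarz on the `N` diagonal
entries of `AAᴴ`, whose trace is `M`, gives `∑ᵢⱼ |⟪vᵢ, vⱼ⟫|² ≥ M² / N`. The diagonal terms
contribute exactly `M`, so the `M(M - 1)` off-diagonal terms average at least
`(M² / N - M) / (M(M - 1)) = (M - N) / (N(M - 1))`, and some term reaches the average.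
-/

open scoped InnerProductSpace

open Finset RCLike Matrix Module

namespace Matrix

variable {𝕜 : Type*} [RCLike 𝕜] {m n : Type*} [Fintype m] [Fintype n]

theorem re_trace_conjTranspose_mul_self (B : Matrix m n 𝕜) :
    re (Bᴴ * B).trace = ∑ i, ∑ j, ‖B i j‖ ^ 2 := by
  rw [Finset.sum_comm]
  simp only [trace, Matrix.diag, mul_apply, conjTranspose_apply, star_def, RCLike.conj_mul, map_sum]
  norm_cast

theorem sum_norm_sq_conjTranspose_mul_self (A : Matrix m n 𝕜) :
    ∑ i, ∑ j, ‖(Aᴴ * A) i j‖ ^ 2 = ∑ i, ∑ j, ‖(A * Aᴴ) i j‖ ^ 2 := by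
  rw [← re_trace_conjTranspose_mul_self, ← re_trace_conjTranspose_mul_self]
  simp only [conjTranspose_mul, conjTranspose_conjTranspose]
  rw [Matrix.mul_assoc, trace_mul_comm]
  simp only [Matrix.mul_assoc]

theorem norm_trace_sq_le (B : Matrix n n 𝕜) :
    ‖B.trace‖ ^ 2 ≤ Fintype.card n * ∑ i, ∑ j, ‖B i j‖ ^ 2 := calc
  ‖B.trace‖ ^ 2 ≤ (∑ i, ‖B i i‖) ^ 2 := by gcongr; exact norm_sum_le _ _
  _ ≤ Fintype.card n * ∑ i, ‖B i i‖ ^ 2 := sq_sum_le_card_mul_sum_sq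
  _ ≤ Fintype.card n * ∑ i, ∑ j, ‖B i j‖ ^ 2 := by
    gcongr with i
    exact single_le_sum (f := fun j ↦ ‖B i j‖ ^ 2) (fun _ _ ↦ by positivity) (mem_univ i)

end Matrix

variable {𝕜 E ι : Type*} [RCLike 𝕜] [NormedAddCommGroup E] [InnerProductSpace 𝕜 E]
  [FiniteDimensional 𝕜 E] [Fintype ι]

theorem sq_sum_norm_sq_le_finrank_mul_sum_norm_inner_sq (v : ι → E) :
    (∑ i, ‖v i‖ ^ 2) ^ 2 ≤ finrank 𝕜 E * ∑ i, ∑ j, ‖⟪v i, v j⟫_𝕜‖ ^ 2 := by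
  set A := Matrix.of fun a i ↦ (stdOrthonormalBasis 𝕜 E).repr (v i) a
  have hgram : gram 𝕜 v = Aᴴ * A := gram_eq_conjTranspose_mul _ v
  have htrace : (A * Aᴴ).trace = ((∑ i, ‖v i‖ ^ 2 : ℝ) : 𝕜) := by
    rw [trace_mul_comm, ← hgram]
    simp [trace, inner_self_eq_norm_sq_to_K]
  calc (∑ i, ‖v i‖ ^ 2) ^ 2 = ‖(A * Aᴴ).trace‖ ^ 2 := by
        rw [htrace, norm_ofReal, abs_of_nonneg (by positivity)]
    _ ≤ finrank 𝕜 E * ∑ a, ∑ b, ‖(A * Aᴴ) a b‖ ^ 2 := by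
        simpa using norm_trace_sq_le (A * Aᴴ)
    _ = finrank 𝕜 E * ∑ i, ∑ j, ‖⟪v i, v j⟫_𝕜‖ ^ 2 := by
        rw [← sum_norm_sq_conjTranspose_mul_self, ← hgram]
        rfl

omit [FiniteDimensional 𝕜 E] in
theorem sum_offDiag_norm_inner_sq [DecidableEq ι] {v : ι → E} (hv : ∀ i, ‖v i‖ = 1) :
    ∑ p ∈ univ.offDiag, ‖⟪v p.1, v p.2⟫_𝕜‖ ^ 2
      = ∑ i, ∑ j, ‖⟪v i, v j⟫_𝕜‖ ^ 2 - Fintype.card ι := by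
  rw [← sum_product', ← diag_union_offDiag,
    sum_union (disjoint_diag_offDiag _), sum_diag]
  simp [inner_self_eq_norm_sq_to_K, hv]

theorem exists_ne_welch_le_norm_inner_sq {v : ι → E} (hv : ∀ i, ‖v i‖ = 1)
    (h : finrank 𝕜 E < Fintype.card ι) :
    ∃ i j, i ≠ j ∧ ((Fintype.card ι : ℝ) - finrank 𝕜 E) / (finrank 𝕜 E * (Fintype.card ι - 1))
      ≤ ‖⟪v i, v j⟫_𝕜‖ ^ 2 := by
  classical
  obtain ⟨i⟩ : Nonempty ι := Fintype.card_pos_iff.mp (Nat.zero_lt_of_lt h)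
  have : Nontrivial E := nontrivial_of_ne (v i) 0 (by simp [← norm_ne_zero_iff, hv])
  obtain ⟨a, b, hab⟩ := Fintype.one_lt_card_iff.mp (h.trans_le' finrank_pos)
  have hframe : (Fintype.card ι : ℝ) ^ 2 ≤ finrank 𝕜 E * ∑ i, ∑ j, ‖⟪v i, v j⟫_𝕜‖ ^ 2 := by
    simpa [hv] using sq_sum_norm_sq_le_finrank_mul_sum_norm_inner_sq (𝕜 := 𝕜) v
  have hoff := sum_offDiag_norm_inner_sq (𝕜 := 𝕜) hv
  have hNM : (finrank 𝕜 E : ℝ) + 1 ≤ Fintype.card ι := by exact_mod_cast h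
  have hN : (0 : ℝ) < finrank 𝕜 E := by exact_mod_cast finrank_pos
  set M : ℝ := (Fintype.card ι : ℝ)
  set N : ℝ := (finrank 𝕜 E : ℝ)
  have hsum : ∑ _p ∈ (univ : Finset ι).offDiag, (M - N) / (N * (M - 1)) ≤
      ∑ p ∈ univ.offDiag, ‖⟪v p.1, v p.2⟫_𝕜‖ ^ 2 := by
    rw [hoff, sum_const, offDiag_card, nsmul_eq_mul, card_univ, Nat.cast_sub (Nat.le_mul_self _),
      Nat.cast_mul]
    have hM : M - 1 ≠ 0 := by linarith
    calc (M * M - M) * ((M - N) / (N * (M - 1))) = M ^ 2 / N - M := by field_simp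
      _ ≤ ∑ i, ∑ j, ‖⟪v i, v j⟫_𝕜‖ ^ 2 - M := by gcongr; rwa [div_le_iff₀' hN]
  obtain ⟨p, hp, hle⟩ := exists_le_of_sum_le ⟨(a, b), by simp [hab]⟩ hsum
  exact ⟨p.1, p.2, (mem_offDiag.mp hp).2.2, hle⟩

theorem stmt_7_general (M N : ℕ) (hMN : N < M)
    (v : Fin M → EuclideanSpace ℂ (Fin N)) (hnorm : ∀ i, ‖v i‖ = 1) :
    ∃ i j, i ≠ j ∧
      Real.sqrt ((M - N) / (N * (M - 1))) ≤ ‖(⟪v i, v j⟫_ℂ : ℂ)‖ := by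
  obtain ⟨i, j, hij, hle⟩ := exists_ne_welch_le_norm_inner_sq (𝕜 := ℂ) hnorm (by simpa using hMN)
  refine ⟨i, j, hij, (Real.sqrt_le_left (norm_nonneg _)).mpr ?_⟩
  simpa using hle

/-- The Welch bound: for `M > N` unit-norm vectors in `ℂ^N`, the maximal pairwise
coherence is at least `sqrt((M−N)/(N(M−1)))`: there exist distinct `i, j` with
`|⟨v i, v j⟩| ≥ sqrt((M−N)/(N(M−1)))`. -/
theorem stmt_7 (M N : ℕ) (hN : 0 < N) (hMN : N < M)
    (v : Fin M → EuclideanSpace ℂ (Fin N)) (hnorm : ∀ i, ‖v i‖ = 1) :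
    ∃ i j, i ≠ j ∧
      Real.sqrt ((M - N) / (N * (M - 1))) ≤ ‖(⟪v i, v j⟫_ℂ : ℂ)‖ :=
  stmt_7_general M N hMN v hnorm
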